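/- arXiv:math-ph/0606047 — 6 statements merged into one kernel-verified Lean document; each statement's English description precedes it below -/
import Mathlib

section
/- Let (s_1, s_2) be a Cuntz family of order 2 on a complex Hilbert space H and let (a_n)_{n≥1} be the associated recursive fermion system. Then (a_n) satisfies the canonical anticommutation relations: a_n a_m^* + a_m^* a_n = δ_{nm}·1 and a_n a_m + a_m a_n = 0 for all n, m ≥ 1. -/
noncomputable section

def IsCuntzFamily {H : Type*} [NormedAddCommGroup H] [InnerProductSpace ℂ H]
    [CompleteSpace H] {N : ℕ} (s : Fin N → H →L[ℂ] H) : Prop :=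
  (∀ i j, star (s i) * s j = if i = j then (1 : H →L[ℂ] H) else 0) ∧
  ∑ i, s i * star (s i) = 1

/-- `rfsAux s n` is the fermion generator `a_{n+1}`. -/
def rfsAux {H : Type*} [NormedAddCommGroup H] [InnerProductSpace ℂ H]
    [CompleteSpace H] (s : Fin 2 → H →L[ℂ] H) : ℕ → H →L[ℂ] H
  | 0 => s 0 * star (s 1)
  | n + 1 => s 0 * rfsAux s n * star (s 0) - s 1 * rfsAux s n * star (s 1)

/-- `rfs s n` is the fermion generator `a_n` (for `n ≥ 1`). -/
def rfs {H : Type*} [NormedAddCommGroup H] [InnerProductSpace ℂ H]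
    [CompleteSpace H] (s : Fin 2 → H →L[ℂ] H) (n : ℕ) : H →L[ℂ] H :=
  rfsAux s (n - 1)

theorem rfs_CAR {H : Type*} [NormedAddCommGroup H] [InnerProductSpace ℂ H]
    [CompleteSpace H] (s : Fin 2 → H →L[ℂ] H) (hs : IsCuntzFamily s) :
    ∀ n m : ℕ, 1 ≤ n → 1 ≤ m →
      (rfs s n * star (rfs s m) + star (rfs s m) * rfs s n
          = if n = m then (1 : H →L[ℂ] H) else 0) ∧
      rfs s n * rfs s m + rfs s m * rfs s n = 0 := by
  obtain ⟨horth, hsum⟩ := hs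
  have h00 : star (s 0) * s 0 = 1 := by simpa using horth 0 0
  have h01 : star (s 0) * s 1 = 0 := by simpa using horth 0 1
  have h10 : star (s 1) * s 0 = 0 := by simpa using horth 1 0
  have h11 : star (s 1) * s 1 = 1 := by simpa using horth 1 1
  have e00 : ∀ x : H →L[ℂ] H, star (s 0) * (s 0 * x) = x := fun x => by
    rw [← mul_assoc, h00, one_mul]
  have e01 : ∀ x : H →L[ℂ] H, star (s 0) * (s 1 * x) = 0 := fun x => by
    rw [← mul_assoc, h01, zero_mul]
  have e10 : ∀ x : H →L[ℂ] H, star (s 1) * (s 0 * x) = 0 := fun x => by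
    rw [← mul_assoc, h10, zero_mul]
  have e11 : ∀ x : H →L[ℂ] H, star (s 1) * (s 1 * x) = x := fun x => by
    rw [← mul_assoc, h11, one_mul]
  have hsum' : s 0 * star (s 0) + s 1 * star (s 1) = 1 := by
    simpa [Fin.sum_univ_two] using hsum
  -- ζ(x)·ζ(y)* = ρ(x y*)
  have zz1 : ∀ x y : H →L[ℂ] H,
      (s 0 * x * star (s 0) - s 1 * x * star (s 1)) *
        star (s 0 * y * star (s 0) - s 1 * y * star (s 1))
      = s 0 * (x * star y) * star (s 0) + s 1 * (x * star y) * star (s 1) := by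
    intro x y
    simp [star_sub, star_mul, star_star, mul_sub, sub_mul, mul_assoc,
      e00, e01, e10, e11, h00, h01, h10, h11]
  -- ζ(y)*·ζ(x) = ρ(y* x)
  have zz2 : ∀ x y : H →L[ℂ] H,
      star (s 0 * y * star (s 0) - s 1 * y * star (s 1)) *
        (s 0 * x * star (s 0) - s 1 * x * star (s 1))
      = s 0 * (star y * x) * star (s 0) + s 1 * (star y * x) * star (s 1) := by
    intro x y
    simp [star_sub, star_mul, star_star, mul_sub, sub_mul, mul_assoc,
      e00, e01, e10, e11, h00, h01, h10, h11]
  -- ζ(x)·ζ(y) = ρ(x y)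
  have zz3 : ∀ x y : H →L[ℂ] H,
      (s 0 * x * star (s 0) - s 1 * x * star (s 1)) *
        (s 0 * y * star (s 0) - s 1 * y * star (s 1))
      = s 0 * (x * y) * star (s 0) + s 1 * (x * y) * star (s 1) := by
    intro x y
    simp [mul_sub, sub_mul, mul_assoc, e00, e01, e10, e11, h00, h01, h10, h11]
  have key : ∀ n m : ℕ,
      (rfsAux s n * star (rfsAux s m) + star (rfsAux s m) * rfsAux s n
        = if n = m then (1 : H →L[ℂ] H) else 0) ∧
      rfsAux s n * rfsAux s m + rfsAux s m * rfsAux s n = 0 := by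
    intro n
    induction n with
    | zero =>
      intro m
      cases m with
      | zero =>
        constructor
        · simp [rfsAux, star_mul, star_star, mul_assoc, e00, e01, e10, e11,
            h00, h01, h10, h11, hsum']
        · simp [rfsAux, mul_assoc, e00, e01, e10, e11, h00, h01, h10, h11]
      | succ m =>
        constructor
        · simp [rfsAux, star_sub, star_mul, star_star, mul_sub, sub_mul,
            mul_assoc, e00, e01, e10, e11, h00, h01, h10, h11]
        · simp [rfsAux, mul_sub, sub_mul, mul_assoc, e00, e01, e10, e11,
            h00, h01, h10, h11]
    | succ n ih =>
      intro m
      cases m with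
      | zero =>
        constructor
        · simp [rfsAux, star_sub, star_mul, star_star, mul_sub, sub_mul,
            mul_assoc, e00, e01, e10, e11, h00, h01, h10, h11]
        · simp [rfsAux, mul_sub, sub_mul, mul_assoc, e00, e01, e10, e11,
            h00, h01, h10, h11]
      | succ m =>
        obtain ⟨ih1, ih2⟩ := ih m
        constructor
        · show rfsAux s (n+1) * star (rfsAux s (m+1)) + star (rfsAux s (m+1)) * rfsAux s (n+1) = _
          rw [rfsAux, rfsAux, zz1, zz2]
          have : s 0 * (rfsAux s n * star (rfsAux s m)) * star (s 0) +
              s 1 * (rfsAux s n * star (rfsAux s m)) * star (s 1) +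
              (s 0 * (star (rfsAux s m) * rfsAux s n) * star (s 0) +
              s 1 * (star (rfsAux s m) * rfsAux s n) * star (s 1))
              = s 0 * (rfsAux s n * star (rfsAux s m) + star (rfsAux s m) * rfsAux s n) * star (s 0) +
                s 1 * (rfsAux s n * star (rfsAux s m) + star (rfsAux s m) * rfsAux s n) * star (s 1) := by
            noncomm_ring
          rw [this, ih1]
          rcases eq_or_ne n m with h | h
          · simp [h, hsum']
          · simp [h, fun hc : n + 1 = m + 1 => h (Nat.succ_injective hc)]
        · rw [rfsAux, rfsAux, zz3, zz3]
          have : s 0 * (rfsAux s n * rfsAux s m) * star (s 0) +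
              s 1 * (rfsAux s n * rfsAux s m) * star (s 1) +
              (s 0 * (rfsAux s m * rfsAux s n) * star (s 0) +
              s 1 * (rfsAux s m * rfsAux s n) * star (s 1))
              = s 0 * (rfsAux s n * rfsAux s m + rfsAux s m * rfsAux s n) * star (s 0) +
                s 1 * (rfsAux s n * rfsAux s m + rfsAux s m * rfsAux s n) * star (s 1) := by
            noncomm_ring
          rw [this, ih2]
          simp
  intro n m hn hm
  have h := key (n - 1) (m - 1)
  have hiff : (n - 1 = m - 1) ↔ (n = m) := by omega
  simp only [hiff] at h
  simpa [rfs] using h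
end
end

section
/- Let (s_1, s_2) be a Cuntz family of order 2 on a nonzero complex Hilbert space H and let (a_n)_{n≥1} be the associated recursive fermion system. Then the operator-norm closure of the unital *-subalgebra of B(H) generated by {a_n : n ≥ 1} equals the operator-norm closure of the linear span of {s_K s_L^* : K, L finite words with letters in {1,2} and |K| = |L|} (including the empty word, for which s_∅ s_∅^* = 1). -/
noncomputable section

/-- `wordOp s J = s_{j_1} ⋯ s_{j_k}` for a finite word `J`. -/
def wordOp {H : Type*} [NormedAddCommGroup H] [InnerProductSpace ℂ H]
    [CompleteSpace H] {N : ℕ} (s : Fin N → H →L[ℂ] H) : List (Fin N) → H →L[ℂ] H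
  | [] => 1
  | j :: J => s j * wordOp s J

section aux

variable {H : Type*} [NormedAddCommGroup H] [InnerProductSpace ℂ H]
  [CompleteSpace H] (s : Fin 2 → H →L[ℂ] H) (hs : IsCuntzFamily s)

lemma wordOp_append (K L : List (Fin 2)) :
    wordOp s (K ++ L) = wordOp s K * wordOp s L := by
  induction K with
  | nil => simp [wordOp]
  | cons a K ih => simp [wordOp, ih, mul_assoc]

lemma star_word_mul_word (hs : IsCuntzFamily s) (L M : List (Fin 2)) :
    star (wordOp s L) * wordOp s M =
      if L <+: M then wordOp s (M.drop L.length)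
      else if M <+: L then star (wordOp s (L.drop M.length)) else 0 := by
  induction L generalizing M with
  | nil => simp [wordOp]
  | cons a L ih =>
    cases M with
    | nil => simp [wordOp]
    | cons b M =>
      have : star (wordOp s (a :: L)) * wordOp s (b :: M)
          = star (wordOp s L) * ((star (s a) * s b) * wordOp s M) := by
        simp [wordOp, star_mul, mul_assoc]
      rw [this, hs.1 a b]
      by_cases hab : a = b
      · subst hab
        rw [if_pos rfl, one_mul]
        simp only [List.cons_prefix_cons, true_and, List.length_cons,
          List.drop_succ_cons]
        exact ih M
      · simp [hab, List.cons_prefix_cons, Ne.symm hab]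

end aux

section main

variable {H : Type*} [NormedAddCommGroup H] [InnerProductSpace ℂ H]
  [CompleteSpace H] (s : Fin 2 → H →L[ℂ] H)

/-- canonical endomorphism -/
def gam (x : H →L[ℂ] H) : H →L[ℂ] H :=
  s 0 * x * star (s 0) + s 1 * x * star (s 1)

lemma sandwich (hs : IsCuntzFamily s) (i j : Fin 2) (x y : H →L[ℂ] H) :
    (s i * x * star (s i)) * (s j * y * star (s j)) =
      if i = j then s i * (x * y) * star (s i) else 0 := by
  have e : star (s i) * (s j * (y * star (s j)))
      = (if i = j then (1 : H →L[ℂ] H) else 0) * (y * star (s j)) := by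
    rw [← mul_assoc, hs.1 i j]
  have main : (s i * x * star (s i)) * (s j * y * star (s j))
      = s i * (x * (star (s i) * (s j * (y * star (s j))))) := by
    simp only [mul_assoc]
  rw [main, e]
  by_cases hij : i = j
  · subst hij
    simp [mul_assoc]
  · simp [hij]

lemma gam_one (hs : IsCuntzFamily s) : gam s 1 = 1 := by
  have := hs.2
  rw [Fin.sum_univ_two] at this
  simpa [gam] using this

lemma gam_mul (hs : IsCuntzFamily s) (x y : H →L[ℂ] H) :
    gam s (x * y) = gam s x * gam s y := by
  simp only [gam, add_mul, mul_add, sandwich s hs]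
  norm_num

lemma gam_star (x : H →L[ℂ] H) : gam s (star x) = star (gam s x) := by
  simp [gam, star_mul, mul_assoc]

lemma gam_add (x y : H →L[ℂ] H) : gam s (x + y) = gam s x + gam s y := by
  simp only [gam, mul_add, add_mul]
  abel

lemma gam_smul (c : ℂ) (x : H →L[ℂ] H) : gam s (c • x) = c • gam s x := by
  simp [gam, mul_smul_comm, smul_mul_assoc]

end main

section adjside

variable {H : Type*} [NormedAddCommGroup H] [InnerProductSpace ℂ H]
  [CompleteSpace H] (s : Fin 2 → H →L[ℂ] H)

/-- the star algebra generated by the recursive fermion system -/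
def rfsAlg : StarSubalgebra ℂ (H →L[ℂ] H) :=
  StarAlgebra.adjoin ℂ {x : H →L[ℂ] H | ∃ n : ℕ, 1 ≤ n ∧ x = rfs s n}

lemma rfs_one : rfs s 1 = s 0 * star (s 1) := rfl

lemma rfs_mem (n : ℕ) (hn : 1 ≤ n) : rfs s n ∈ rfsAlg s :=
  StarAlgebra.subset_adjoin ℂ _ ⟨n, hn, rfl⟩

lemma ss0 (hs : IsCuntzFamily s) :
    s 0 * star (s 0) = rfs s 1 * star (rfs s 1) := by
  have h := hs.1 1 1
  rw [if_pos rfl] at h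
  rw [rfs_one, star_mul, star_star]
  symm
  calc s 0 * star (s 1) * (s 1 * star (s 0))
      = s 0 * ((star (s 1) * s 1) * star (s 0)) := by simp only [mul_assoc]
    _ = s 0 * star (s 0) := by rw [h, one_mul]

lemma ss1 (hs : IsCuntzFamily s) :
    s 1 * star (s 1) = star (rfs s 1) * rfs s 1 := by
  have h := hs.1 0 0
  rw [if_pos rfl] at h
  rw [rfs_one, star_mul, star_star]
  symm
  calc s 1 * star (s 0) * (s 0 * star (s 1))
      = s 1 * ((star (s 0) * s 0) * star (s 1)) := by simp only [mul_assoc]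
    _ = s 1 * star (s 1) := by rw [h, one_mul]

lemma F_mem (hs : IsCuntzFamily s) :
    s 0 * star (s 0) - s 1 * star (s 1) ∈ rfsAlg s := by
  rw [ss0 s hs, ss1 s hs]
  have h1 := rfs_mem s 1 le_rfl
  exact sub_mem (mul_mem h1 (star_mem h1)) (mul_mem (star_mem h1) h1)

lemma F_zeta (hs : IsCuntzFamily s) (x : H →L[ℂ] H) :
    (s 0 * star (s 0) - s 1 * star (s 1)) *
      (s 0 * x * star (s 0) - s 1 * x * star (s 1)) = gam s x := by
  have h := sandwich s hs
  have e0 : (s 0 * star (s 0)) = s 0 * 1 * star (s 0) := by rw [mul_one]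
  have e1 : (s 1 * star (s 1)) = s 1 * 1 * star (s 1) := by rw [mul_one]
  rw [e0, e1]
  simp only [sub_mul, mul_sub, h]
  norm_num [gam]

lemma gam_mem (hs : IsCuntzFamily s) {x : H →L[ℂ] H} (hx : x ∈ rfsAlg s) :
    gam s x ∈ rfsAlg s := by
  induction hx using StarAlgebra.adjoin_induction with
  | mem x h =>
    obtain ⟨n, hn, rfl⟩ := h
    have key : gam s (rfs s n) =
        (s 0 * star (s 0) - s 1 * star (s 1)) * rfs s (n + 1) := by
      have : rfs s (n + 1) = rfsAux s ((n - 1) + 1) := by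
        unfold rfs
        congr 1
        omega
      rw [this]
      rw [← F_zeta s hs (rfs s n)]
      rfl
    rw [key]
    exact mul_mem (F_mem s hs) (rfs_mem s (n + 1) (by omega))
  | algebraMap c =>
    have e : gam s (algebraMap ℂ (H →L[ℂ] H) c) = algebraMap ℂ (H →L[ℂ] H) c := by
      rw [Algebra.algebraMap_eq_smul_one, gam_smul, gam_one s hs]
    rw [e]
    exact algebraMap_mem _ c
  | add x y hx hy ihx ihy => rw [gam_add]; exact add_mem ihx ihy
  | mul x y hx hy ihx ihy => rw [gam_mul s hs]; exact mul_mem ihx ihy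
  | star x hx ihx => rw [gam_star]; exact star_mem ihx

lemma sxs_mem (hs : IsCuntzFamily s) (i j : Fin 2) {x : H →L[ℂ] H}
    (hx : x ∈ rfsAlg s) : s i * x * star (s j) ∈ rfsAlg s := by
  have h1 := rfs_mem s 1 le_rfl
  have proj : ∀ k : Fin 2, s k * x * star (s k)
      = (s k * star (s k)) * gam s x := by
    intro k
    have e : ∀ m : Fin 2, (s k * star (s k)) * (s m * x * star (s m))
        = if k = m then s k * x * star (s k) else 0 := by
      intro m
      have := sandwich s hs k m 1 x
      rw [mul_one] at this
      rw [this]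
      by_cases hkm : k = m
      · subst hkm; simp [mul_assoc]
      · simp [hkm]
    rw [gam, mul_add, e 0, e 1]
    fin_cases k <;> simp
  have mem0 : s 0 * x * star (s 0) ∈ rfsAlg s := by
    rw [proj 0, ss0 s hs]
    exact mul_mem (mul_mem h1 (star_mem h1)) (gam_mem s hs hx)
  have mem1 : s 1 * x * star (s 1) ∈ rfsAlg s := by
    rw [proj 1, ss1 s hs]
    exact mul_mem (mul_mem (star_mem h1) h1) (gam_mem s hs hx)
  have h11 : star (s 1) * s 1 = 1 := by simpa using hs.1 1 1
  have h00 : star (s 0) * s 0 = 1 := by simpa using hs.1 0 0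
  have e01 : s 0 * x * star (s 1) = (s 0 * x * star (s 0)) * rfs s 1 := by
    rw [rfs_one]
    symm
    calc s 0 * x * star (s 0) * (s 0 * star (s 1))
        = s 0 * (x * ((star (s 0) * s 0) * star (s 1))) := by
          simp only [mul_assoc]
      _ = s 0 * x * star (s 1) := by rw [h00, one_mul, ← mul_assoc]
  have e10 : s 1 * x * star (s 0) = (s 1 * x * star (s 1)) * star (rfs s 1) := by
    rw [rfs_one, star_mul, star_star]
    symm
    calc s 1 * x * star (s 1) * (s 1 * star (s 0))
        = s 1 * (x * ((star (s 1) * s 1) * star (s 0))) := by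
          simp only [mul_assoc]
      _ = s 1 * x * star (s 0) := by rw [h11, one_mul, ← mul_assoc]
  match i, j with
  | 0, 0 => exact mem0
  | 0, 1 => rw [e01]; exact mul_mem mem0 h1
  | 1, 0 => rw [e10]; exact mul_mem mem1 (star_mem h1)
  | 1, 1 => exact mem1

lemma words_mem (hs : IsCuntzFamily s) :
    ∀ K L : List (Fin 2), K.length = L.length →
      wordOp s K * star (wordOp s L) ∈ rfsAlg s := by
  intro K
  induction K with
  | nil =>
    intro L hL
    cases L with
    | nil => simpa [wordOp] using one_mem (rfsAlg s)
    | cons b M => simp at hL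
  | cons a K ih =>
    intro L hL
    cases L with
    | nil => simp at hL
    | cons b M =>
      have e : wordOp s (a :: K) * star (wordOp s (b :: M))
          = s a * (wordOp s K * star (wordOp s M)) * star (s b) := by
        simp [wordOp, star_mul, mul_assoc]
      rw [e]
      exact sxs_mem s hs a b (ih M (by simpa using hL))

end adjside

section spanside

variable {H : Type*} [NormedAddCommGroup H] [InnerProductSpace ℂ H]
  [CompleteSpace H] (s : Fin 2 → H →L[ℂ] H)

def gaugeSet : Set (H →L[ℂ] H) :=
  {x | ∃ K L : List (Fin 2), K.length = L.length ∧
    x = wordOp s K * star (wordOp s L)}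

lemma one_mem_gaugeSet : (1 : H →L[ℂ] H) ∈ gaugeSet s :=
  ⟨[], [], rfl, by simp [wordOp]⟩

lemma star_mem_gaugeSpan {x : H →L[ℂ] H}
    (hx : x ∈ Submodule.span ℂ (gaugeSet s)) :
    star x ∈ Submodule.span ℂ (gaugeSet s) := by
  induction hx using Submodule.span_induction with
  | mem x h =>
    obtain ⟨K, L, hKL, rfl⟩ := h
    refine Submodule.subset_span ⟨L, K, hKL.symm, ?_⟩
    simp [star_mul]
  | zero => simp
  | add x y hx hy ihx ihy => rw [star_add]; exact add_mem ihx ihy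
  | smul c x hx ihx =>
    rw [star_smul]
    exact Submodule.smul_mem _ _ ihx

lemma conj_mem_gaugeSpan (i : Fin 2) {x : H →L[ℂ] H}
    (hx : x ∈ Submodule.span ℂ (gaugeSet s)) :
    s i * x * star (s i) ∈ Submodule.span ℂ (gaugeSet s) := by
  induction hx using Submodule.span_induction with
  | mem x h =>
    obtain ⟨K, L, hKL, rfl⟩ := h
    refine Submodule.subset_span ⟨i :: K, i :: L, by simpa using hKL, ?_⟩
    simp [wordOp, star_mul, mul_assoc]
  | zero => simp
  | add x y hx hy ihx ihy =>
    have e : s i * (x + y) * star (s i)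
        = s i * x * star (s i) + s i * y * star (s i) := by
      rw [mul_add, add_mul]
    rw [e]; exact add_mem ihx ihy
  | smul c x hx ihx =>
    have e : s i * (c • x) * star (s i) = c • (s i * x * star (s i)) := by
      rw [mul_smul_comm, smul_mul_assoc]
    rw [e]; exact Submodule.smul_mem _ _ ihx

lemma rfsAux_mem_gaugeSpan (m : ℕ) :
    rfsAux s m ∈ Submodule.span ℂ (gaugeSet s) := by
  induction m with
  | zero =>
    refine Submodule.subset_span ⟨[0], [1], rfl, ?_⟩
    simp [rfsAux, wordOp]
  | succ n ih =>
    exact sub_mem (conj_mem_gaugeSpan s 0 ih) (conj_mem_gaugeSpan s 1 ih)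

lemma mul_mem_gaugeSpan (hs : IsCuntzFamily s) {x y : H →L[ℂ] H}
    (hx : x ∈ Submodule.span ℂ (gaugeSet s))
    (hy : y ∈ Submodule.span ℂ (gaugeSet s)) :
    x * y ∈ Submodule.span ℂ (gaugeSet s) := by
  induction hx using Submodule.span_induction with
  | mem x h =>
    induction hy using Submodule.span_induction with
    | mem y h' =>
      obtain ⟨K, L, hKL, rfl⟩ := h
      obtain ⟨M, N, hMN, rfl⟩ := h'
      have e : wordOp s K * star (wordOp s L) * (wordOp s M * star (wordOp s N))
          = wordOp s K * (star (wordOp s L) * wordOp s M) * star (wordOp s N) := by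
        simp only [mul_assoc]
      rw [e, star_word_mul_word s hs]
      split_ifs with h1 h2
      · refine Submodule.subset_span
          ⟨K ++ M.drop L.length, N, ?_, by rw [wordOp_append]⟩
        have := h1.length_le
        simp only [List.length_append, List.length_drop]
        omega
      · refine Submodule.subset_span
          ⟨K, N ++ L.drop M.length, ?_, ?_⟩
        · have := h2.length_le
          simp only [List.length_append, List.length_drop]
          omega
        · rw [wordOp_append, star_mul, mul_assoc]
      · simp
    | zero => simp
    | add y z hy hz ihy ihz => rw [mul_add]; exact add_mem ihy ihz
    | smul c y hy ihy => rw [mul_smul_comm]; exact Submodule.smul_mem _ _ ihy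
  | zero => simp
  | add x z hx hz ihx ihz => rw [add_mul]; exact add_mem ihx ihz
  | smul c x hx ihx => rw [smul_mul_assoc]; exact Submodule.smul_mem _ _ ihx

lemma adjoin_subset_gaugeSpan (hs : IsCuntzFamily s) {x : H →L[ℂ] H}
    (hx : x ∈ rfsAlg s) : x ∈ Submodule.span ℂ (gaugeSet s) := by
  induction hx using StarAlgebra.adjoin_induction with
  | mem x h =>
    obtain ⟨n, hn, rfl⟩ := h
    exact rfsAux_mem_gaugeSpan s (n - 1)
  | algebraMap c =>
    rw [Algebra.algebraMap_eq_smul_one]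
    exact Submodule.smul_mem _ _ (Submodule.subset_span (one_mem_gaugeSet s))
  | add x y hx hy ihx ihy => exact add_mem ihx ihy
  | mul x y hx hy ihx ihy => exact mul_mem_gaugeSpan s hs ihx ihy
  | star x hx ihx => exact star_mem_gaugeSpan s ihx

end spanside

theorem rfs_generates_gauge_invariant_subalgebra
    {H : Type*} [NormedAddCommGroup H] [InnerProductSpace ℂ H]
    [CompleteSpace H] [Nontrivial H]
    (s : Fin 2 → H →L[ℂ] H) (hs : IsCuntzFamily s) :
    closure ((StarAlgebra.adjoin ℂ {x : H →L[ℂ] H | ∃ n : ℕ, 1 ≤ n ∧ x = rfs s n} :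
        StarSubalgebra ℂ (H →L[ℂ] H)) : Set (H →L[ℂ] H)) =
    closure ((Submodule.span ℂ {x : H →L[ℂ] H | ∃ K L : List (Fin 2),
        K.length = L.length ∧ x = wordOp s K * star (wordOp s L)} :
        Submodule ℂ (H →L[ℂ] H)) : Set (H →L[ℂ] H)) := by
  have hset : ((StarAlgebra.adjoin ℂ
      {x : H →L[ℂ] H | ∃ n : ℕ, 1 ≤ n ∧ x = rfs s n} :
      StarSubalgebra ℂ (H →L[ℂ] H)) : Set (H →L[ℂ] H)) =
      ((Submodule.span ℂ (gaugeSet s) : Submodule ℂ (H →L[ℂ] H)) :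
        Set (H →L[ℂ] H)) := by
    apply Set.Subset.antisymm
    · intro x hx
      exact adjoin_subset_gaugeSpan s hs hx
    · intro x hx
      induction hx using Submodule.span_induction with
      | mem x h =>
        obtain ⟨K, L, hKL, rfl⟩ := h
        exact words_mem s hs K L hKL
      | zero => exact zero_mem _
      | add x y hx hy ihx ihy => exact add_mem ihx ihy
      | smul c x hx ihx =>
        exact SMulMemClass.smul_mem c ihx
  rw [show {x : H →L[ℂ] H | ∃ K L : List (Fin 2),
      K.length = L.length ∧ x = wordOp s K * star (wordOp s L)} = gaugeSet s
    from rfl]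
  rw [hset]
end
end

section
/- Let (s_1,…,s_N) be a Cuntz family of order N on a complex Hilbert space H, let J be an infinite word with letters in {1,…,N}, and let Ω ∈ H be a UHF-cyclic unit vector satisfying the P[J]-condition. Then every bounded operator on H commuting with all operators s_K s_L^* (K, L finite words with |K| = |L|) is a scalar multiple of the identity; that is, the representation P[J] is irreducible. -/
/-!
Since `T` commutes with the projections `s_{J_n} s_{J_n}^*`, the vector `T Ω` again satisfies the
`P[J]`-condition, and so does `w = T Ω - c Ω` with `c = ⟪Ω, T Ω⟫`, which is orthogonal to `Ω`.
For vectors `v, w` satisfying the `P[J]`-condition, `s_L^* v = 0` unless `L` is a prefix of `J`,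
so `⟪s_K s_L^* v, w⟫ = ⟪s_L^* v, s_K^* w⟫` vanishes unless `K = L = J_n`, where it is `⟪v, w⟫`.
Hence `w` is orthogonal to the UHF-cyclic span, so `T Ω = c Ω`; then `T - c` commutes with every
`s_K s_L^*` and kills `Ω`, so it vanishes on a dense subspace.
-/

noncomputable section

/-- Closed linear span of `{s_K s_L^* v : |K| = |L|}`. -/
def UHFSpan {H : Type*} [NormedAddCommGroup H] [InnerProductSpace ℂ H]
    [CompleteSpace H] {N : ℕ} (s : Fin N → H →L[ℂ] H) (v : H) : Submodule ℂ H :=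
  (Submodule.span ℂ {x : H | ∃ K L : List (Fin N), K.length = L.length ∧
      x = (wordOp s K * star (wordOp s L)) v}).topologicalClosure

/-- `Ω` is UHF-cyclic: the closed span of `{s_K s_L^* Ω : |K| = |L|}` is the whole space. -/
def IsUHFCyclic {H : Type*} [NormedAddCommGroup H] [InnerProductSpace ℂ H]
    [CompleteSpace H] {N : ℕ} (s : Fin N → H →L[ℂ] H) (Ω : H) : Prop :=
  UHFSpan s Ω = ⊤

/-- The `P[w]`-condition for an infinite word `w` (0-indexed). -/
def PCond {H : Type*} [NormedAddCommGroup H] [InnerProductSpace ℂ H]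
    [CompleteSpace H] {N : ℕ} (s : Fin N → H →L[ℂ] H) (w : ℕ → Fin N) (Ω : H) : Prop :=
  ∀ n : ℕ, (wordOp s (List.ofFn fun k : Fin n => w k) *
      star (wordOp s (List.ofFn fun k : Fin n => w k))) Ω = Ω

section

variable {H : Type*} [NormedAddCommGroup H] [InnerProductSpace ℂ H] [CompleteSpace H]
  {N : ℕ} {s : Fin N → H →L[ℂ] H}

theorem IsCuntzFamily.star_wordOp_mul_wordOp (hs : IsCuntzFamily s) :
    ∀ K L : List (Fin N), K.length = L.length →
      star (wordOp s K) * wordOp s L = if K = L then 1 else 0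
  | [], [], _ => by simp [wordOp]
  | a :: K, b :: L, hKL => by
    have hassoc : star (wordOp s (a :: K)) * wordOp s (b :: L)
        = star (wordOp s K) * (star (s a) * s b) * wordOp s L := by
      simp only [wordOp, star_mul, mul_assoc]
    rw [hassoc, hs.1 a b]
    by_cases hab : a = b
    · subst hab
      simp [hs.star_wordOp_mul_wordOp K L (by simpa using hKL)]
    · simp [hab]

namespace IsUHFCyclic

variable {Ω : H}

theorem ext {E : Type*} [NormedAddCommGroup E] [NormedSpace ℂ E] (hcyc : IsUHFCyclic s Ω)
    {f g : H →L[ℂ] E}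
    (h : ∀ K L : List (Fin N), K.length = L.length →
      f ((wordOp s K * star (wordOp s L)) Ω) = g ((wordOp s K * star (wordOp s L)) Ω)) :
    f = g :=
  ContinuousLinearMap.ext_on (Submodule.dense_iff_topologicalClosure_eq_top.mpr hcyc) <| by
    rintro _ ⟨K, L, hKL, rfl⟩
    exact h K L hKL

theorem eq_zero_of_inner (hcyc : IsUHFCyclic s Ω) {w : H}
    (h : ∀ K L : List (Fin N), K.length = L.length →
      inner ℂ ((wordOp s K * star (wordOp s L)) Ω) w = 0) :
    w = 0 := by
  have hw : innerSL ℂ w = 0 := hcyc.ext fun K L hKL => by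
    simpa using inner_eq_zero_symm.mp (h K L hKL)
  simpa using congr($hw w)

end IsUHFCyclic

namespace PCond

variable {J : ℕ → Fin N} {v w : H}

theorem sub_smul (hv : PCond s J v) (hw : PCond s J w) (c : ℂ) : PCond s J (v - c • w) :=
  fun n => by rw [map_sub, map_smul, hv n, hw n]

theorem map_of_commute (hv : PCond s J v) {T : H →L[ℂ] H}
    (hT : ∀ n, Commute T (wordOp s (List.ofFn fun k : Fin n => J k) *
      star (wordOp s (List.ofFn fun k : Fin n => J k)))) :
    PCond s J (T v) :=
  fun n => by rw [← mul_apply_eq_comp, ← (hT n).eq, mul_apply_eq_comp, hv n]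

theorem star_wordOp_apply_eq_zero (hs : IsCuntzFamily s) (hv : PCond s J v) {L : List (Fin N)}
    (hL : L ≠ List.ofFn fun k : Fin L.length => J k) :
    star (wordOp s L) v = 0 := by
  rw [← hv L.length, ← mul_apply_eq_comp, ← mul_assoc,
    hs.star_wordOp_mul_wordOp L _ (by simp), if_neg hL, zero_mul, zero_apply]

theorem inner_wordOp_mul_star_apply_eq_zero (hs : IsCuntzFamily s) (hv : PCond s J v)
    (hw : PCond s J w) (hvw : inner ℂ v w = 0) {K L : List (Fin N)}
    (hKL : K.length = L.length) :
    inner ℂ ((wordOp s K * star (wordOp s L)) v) w = 0 := by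
  have hadj : inner ℂ ((wordOp s K * star (wordOp s L)) v) w
      = inner ℂ (star (wordOp s L) v) (star (wordOp s K) w) := by
    rw [mul_apply_eq_comp, ContinuousLinearMap.star_eq_adjoint (wordOp s K),
      ContinuousLinearMap.adjoint_inner_right]
  by_cases hL : L = List.ofFn fun k : Fin L.length => J k
  · by_cases hK : K = L
    · subst hK
      rw [hL, hv, hvw]
    · rw [hadj, hw.star_wordOp_apply_eq_zero hs (by rw [hKL, ← hL]; exact hK), inner_zero_right]
  · rw [hadj, hv.star_wordOp_apply_eq_zero hs hL, inner_zero_left]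

end PCond

end

theorem PJ_irreducible
    {H : Type*} [NormedAddCommGroup H] [InnerProductSpace ℂ H] [CompleteSpace H]
    {N : ℕ} (s : Fin N → H →L[ℂ] H) (hs : IsCuntzFamily s)
    (J : ℕ → Fin N) (Ω : H) (hΩ : ‖Ω‖ = 1)
    (hcyc : IsUHFCyclic s Ω) (hP : PCond s J Ω) :
    ∀ T : H →L[ℂ] H,
      (∀ K L : List (Fin N), K.length = L.length →
        T * (wordOp s K * star (wordOp s L)) = (wordOp s K * star (wordOp s L)) * T) →
      ∃ c : ℂ, T = c • (1 : H →L[ℂ] H) := by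
  intro T hT
  set c := inner ℂ Ω (T Ω)
  have hPT : PCond s J (T Ω) := hP.map_of_commute fun n => hT _ _ rfl
  have horth : inner ℂ Ω (T Ω - c • Ω) = 0 := by simp [inner_self_eq_norm_sq_to_K, hΩ, c]
  have hTΩ : T Ω = c • Ω := sub_eq_zero.mp <| hcyc.eq_zero_of_inner fun K L hKL =>
    hP.inner_wordOp_mul_star_apply_eq_zero hs (hPT.sub_smul hP c) horth hKL
  refine ⟨c, hcyc.ext fun K L hKL => ?_⟩
  calc T ((wordOp s K * star (wordOp s L)) Ω)
      = (wordOp s K * star (wordOp s L)) (T Ω) := congr($(hT K L hKL) Ω)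
    _ = (c • (1 : H →L[ℂ] H)) ((wordOp s K * star (wordOp s L)) Ω) := by simp [hTΩ]
end
end

section
/- Let (s_1, s_2) and (s'_1, s'_2) be Cuntz families of order 2 on complex Hilbert spaces H and H' with cyclic unit vectors Ω and Ω' respectively. Then: (1) if (s_1 + s_2)Ω = √2·Ω, then every bounded operator on H commuting with s_1, s_2, s_1^*, s_2^* is a scalar multiple of the identity; (2) if (s_1 + s_2)Ω = √2·Ω and (s'_1 + s'_2)Ω' = √2·Ω' (or if (s_1 − s_2)Ω = √2·Ω and (s'_1 − s'_2)Ω' = √2·Ω'), then there exists a unitary U : H → H' with U s_i = s'_i U for i = 1, 2; (3) if (s_1 + s_2)Ω = √2·Ω and (s'_1 − s'_2)Ω' = √2·Ω', then there exists no unitary U : H → H' with U s_i = s'_i U for i = 1, 2. In other words, GP(+) and GP(−) each contain exactly one unitary equivalence class, each is irreducible, and GP(+) and GP(−) are not equivalent. -/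
noncomputable section

def IsCyclicVec {H : Type*} [NormedAddCommGroup H] [InnerProductSpace ℂ H]
    [CompleteSpace H] {N : ℕ} (s : Fin N → H →L[ℂ] H) (Ω : H) : Prop :=
  ∀ W : Submodule ℂ H, IsClosed (W : Set H) → Ω ∈ W →
    (∀ i, ∀ x ∈ W, s i x ∈ W ∧ star (s i) x ∈ W) → W = ⊤

/-!
Rotating a Cuntz family by a unitary matrix gives a Cuntz family with the same cyclic vectors
and the same intertwiners. The Hadamard rotation `t₀ = (s₀ + s₁)/√2`, `t₁ = (s₀ - s₁)/√2` turns
GP(+) into `t₀ Ω = Ω` and GP(−) into `t₁ Ω = Ω`.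

If `t_k Ω = Ω` and `Ω` is a cyclic unit vector, then `t_{w₁} ⋯ t_{wₙ} Ω`, for the words `w` not
ending in `k`, form a Hilbert basis whose Gram matrix is the identity in every such
representation; mapping one basis to the other is the unitary equivalence. A vector `x` fixed by
some `t_j` satisfies `t_i^* x = δ_{ij} x`, so it is orthogonal to every basis vector except
possibly `Ω`, and `⟪x, Ω⟫ = ⟪t_k^* x, Ω⟫` vanishes unless `j = k`: a fixed vector of `t_k` is a
multiple of `Ω` and one of `t_j`, `j ≠ k`, is zero. The first fact gives irreducibility, since
`T Ω` is fixed by `t₀` for `T` in the commutant; the second gives inequivalence, since an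
intertwiner would carry the GP(+) vector to a fixed vector of `t₀` in a GP(−) representation.
-/

open scoped InnerProductSpace

lemma mapsTo_topologicalClosure_span {R E : Type*} [Semiring R] [TopologicalSpace E]
    [AddCommMonoid E] [Module R E] [ContinuousAdd E] [ContinuousConstSMul R E] (f : E →L[R] E)
    {S : Set E} (hf : ∀ x ∈ S, f x ∈ Submodule.span R S) :
    Set.MapsTo f (Submodule.span R S).topologicalClosure
      (Submodule.span R S).topologicalClosure := by
  have hspan : Set.MapsTo f (Submodule.span R S) (Submodule.span R S) := fun x hx =>
    (Submodule.span_le (p := (Submodule.span R S).comap (f : E →ₗ[R] E)).mpr hf) hx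
  simpa only [Submodule.topologicalClosure_coe] using hspan.closure f.continuous

section Mix

variable {H H' : Type*} [NormedAddCommGroup H] [InnerProductSpace ℂ H]
  [NormedAddCommGroup H'] [InnerProductSpace ℂ H']
  {N : ℕ} {s : Fin N → H →L[ℂ] H} {s' : Fin N → H' →L[ℂ] H'} {u v : Matrix (Fin N) (Fin N) ℂ}

def mixFamily (u : Matrix (Fin N) (Fin N) ℂ) (s : Fin N → H →L[ℂ] H) : Fin N → H →L[ℂ] H :=
  fun i => ∑ j, u i j • s j

lemma mixFamily_mixFamily : mixFamily u (mixFamily v s) = mixFamily (u * v) s := by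
  funext i
  simp only [mixFamily, Finset.smul_sum, smul_smul, Matrix.mul_apply, Finset.sum_smul]
  exact Finset.sum_comm

lemma mixFamily_one : mixFamily 1 s = s := by
  funext i
  simp [mixFamily, Matrix.one_apply]

lemma mixFamily_star_mixFamily (hu : u ∈ Matrix.unitaryGroup (Fin N) ℂ) :
    mixFamily (star u) (mixFamily u s) = s := by
  rw [mixFamily_mixFamily, Matrix.mem_unitaryGroup_iff'.mp hu, mixFamily_one]

lemma map_mixFamily_apply {F : Type*} [FunLike F H H'] [LinearMapClass F ℂ H H'] (U : F)
    (hU : ∀ i x, U (s i x) = s' i (U x)) (i : Fin N) (x : H) :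
    U (mixFamily u s i x) = mixFamily u s' i (U x) := by
  simp [mixFamily, hU]

lemma intertwines_of_mixFamily {F : Type*} [FunLike F H H'] [LinearMapClass F ℂ H H']
    (hu : u ∈ Matrix.unitaryGroup (Fin N) ℂ) (U : F)
    (hU : ∀ i x, U (mixFamily u s i x) = mixFamily u s' i (U x)) (i : Fin N) (x : H) :
    U (s i x) = s' i (U x) := by
  rw [← mixFamily_star_mixFamily hu (s := s), ← mixFamily_star_mixFamily hu (s := s')]
  exact map_mixFamily_apply U hU i x

variable [CompleteSpace H]

lemma star_mixFamily (i : Fin N) :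
    star (mixFamily u s i) = ∑ j, star (u i j) • star (s j) := by
  simp only [mixFamily, star_sum, star_smul]

lemma isCuntzFamily_mixFamily (hs : IsCuntzFamily s) (hu : u ∈ Matrix.unitaryGroup (Fin N) ℂ) :
    IsCuntzFamily (mixFamily u s) := by
  constructor
  · intro i j
    have hu' := congrFun (congrFun (Matrix.mem_unitaryGroup_iff.mp hu) j) i
    simp only [Matrix.mul_apply, Matrix.star_apply, Matrix.one_apply] at hu'
    rw [star_mixFamily]
    simp only [mixFamily, Finset.sum_mul_sum, smul_mul_smul_comm, hs.1, smul_ite, smul_zero,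
      Finset.sum_ite_eq, Finset.mem_univ, if_true, ← Finset.sum_smul]
    simp_rw [mul_comm (star (u i _)), hu', eq_comm (a := j)]
    split_ifs <;> simp
  · have hu' : ∀ k l, ∑ i, u i k * star (u i l) = if l = k then 1 else 0 := fun k l => by
      simpa [Matrix.mul_apply, Matrix.star_apply, Matrix.one_apply, mul_comm]
        using congrFun (congrFun (Matrix.mem_unitaryGroup_iff'.mp hu) l) k
    simp only [star_mixFamily]
    simp only [mixFamily, Finset.sum_mul_sum, smul_mul_smul_comm]
    calc _ = ∑ k, ∑ l, (∑ i, u i k * star (u i l)) • (s k * star (s l)) := by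
          simp only [Finset.sum_smul]
          rw [Finset.sum_comm]
          exact Finset.sum_congr rfl fun k _ => Finset.sum_comm
      _ = ∑ k, s k * star (s k) := by
          simp only [hu', ite_smul, one_smul, zero_smul, Finset.sum_ite_eq', Finset.mem_univ,
            if_true]
      _ = 1 := hs.2

lemma isCyclicVec_of_mixFamily {Ω : H} (h : IsCyclicVec (mixFamily u s) Ω) : IsCyclicVec s Ω := by
  refine fun W hW hΩ hinv => h W hW hΩ fun i x hx => ⟨?_, ?_⟩
  · simpa [mixFamily] using W.sum_mem fun j _ => W.smul_mem (u i j) (hinv j x hx).1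
  · simpa [star_mixFamily] using W.sum_mem fun j _ => W.smul_mem (star (u i j)) (hinv j x hx).2

lemma isCyclicVec_mixFamily {Ω : H} (h : IsCyclicVec s Ω)
    (hu : u ∈ Matrix.unitaryGroup (Fin N) ℂ) : IsCyclicVec (mixFamily u s) Ω := by
  rw [← mixFamily_star_mixFamily hu (s := s)] at h
  exact isCyclicVec_of_mixFamily h

end Mix

section ReducedWords

variable {α : Type*}

abbrev ReducedWord (k : α) : Type _ := {w : List α // w.getLast? ≠ some k}

lemma getLast?_ne_of_cons {k i : α} {w : List α} (h : (i :: w).getLast? ≠ some k) :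
    w.getLast? ≠ some k := by
  cases w with
  | nil => simp
  | cons j w => rwa [List.getLast?_cons_cons] at h

lemma eq_nil_of_forall_mem_eq {k : α} {w : List α} (hw : w.getLast? ≠ some k)
    (h : ∀ i ∈ w, i = k) : w = [] := by
  by_contra hne
  exact hw (by rw [List.getLast?_eq_some_getLast hne, h _ (List.getLast_mem hne)])

variable [DecidableEq α]

def reduceWord (k : α) : List α → List α
  | [] => []
  | i :: w => if i = k ∧ reduceWord k w = [] then [] else i :: reduceWord k w

lemma getLast?_reduceWord_ne (k : α) (w : List α) :
    (reduceWord k w).getLast? ≠ some k := by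
  induction w with
  | nil => simp [reduceWord]
  | cons i w ih =>
    rw [reduceWord]
    split_ifs with h
    · simp
    · rcases eq_or_ne (reduceWord k w) [] with hw | hw
      · simpa [hw] using fun hi => h ⟨hi, hw⟩
      · rwa [List.getLast?_cons_of_ne_nil hw]

end ReducedWords

section Words

variable {H : Type*} [NormedAddCommGroup H] [InnerProductSpace ℂ H]
  {N : ℕ} {t : Fin N → H →L[ℂ] H} {Ω : H} {k : Fin N}

def wordVec (t : Fin N → H →L[ℂ] H) (Ω : H) : List (Fin N) → H
  | [] => Ω
  | i :: w => t i (wordVec t Ω w)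

@[simp] lemma wordVec_nil : wordVec t Ω [] = Ω := rfl

@[simp] lemma wordVec_cons (i : Fin N) (w : List (Fin N)) :
    wordVec t Ω (i :: w) = t i (wordVec t Ω w) := rfl

lemma wordVec_reduceWord (hfix : t k Ω = Ω) (w : List (Fin N)) :
    wordVec t Ω (reduceWord k w) = wordVec t Ω w := by
  induction w with
  | nil => rfl
  | cons i w ih =>
    rw [reduceWord]
    split_ifs with h
    · rw [wordVec_cons, h.1, ← ih, h.2, wordVec_nil, hfix]
    · rw [wordVec_cons, wordVec_cons, ih]

lemma range_wordVec_reduced (hfix : t k Ω = Ω) :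
    Set.range (fun w : ReducedWord k => wordVec t Ω w.1) = Set.range (wordVec t Ω) := by
  refine subset_antisymm (Set.range_comp_subset_range _ _) ?_
  rintro _ ⟨w, rfl⟩
  exact ⟨⟨reduceWord k w, getLast?_reduceWord_ne k w⟩, wordVec_reduceWord hfix w⟩

variable [CompleteSpace H]

lemma IsCuntzFamily.star_apply_apply (ht : IsCuntzFamily t) (i j : Fin N) (x : H) :
    star (t i) (t j x) = if i = j then x else 0 := by
  simpa [apply_ite (fun A : H →L[ℂ] H => A x)] using congr($(ht.1 i j) x)

lemma IsCuntzFamily.star_apply_of_apply_eq_self (ht : IsCuntzFamily t) {j : Fin N} {x : H}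
    (hx : t j x = x) (i : Fin N) : star (t i) x = if i = j then x else 0 := by
  conv_lhs => rw [← hx]
  exact ht.star_apply_apply i j x

lemma inner_wordVec_of_star_apply {j : Fin N} {x : H}
    (hx : ∀ i, star (t i) x = if i = j then x else 0) (w : List (Fin N)) :
    ⟪x, wordVec t Ω w⟫_ℂ = if ∀ i ∈ w, i = j then ⟪x, Ω⟫_ℂ else 0 := by
  induction w with
  | nil => simp
  | cons i w ih =>
    rw [wordVec_cons, ← ContinuousLinearMap.adjoint_inner_left,
      ← ContinuousLinearMap.star_eq_adjoint, hx]
    by_cases hij : i = j <;> simp [hij, ih]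

lemma IsCuntzFamily.inner_wordVec_of_apply_eq_self (ht : IsCuntzFamily t) {j : Fin N} {x : H}
    (hx : t j x = x) (w : List (Fin N)) :
    ⟪x, wordVec t Ω w⟫_ℂ = if ∀ i ∈ w, i = j then ⟪x, Ω⟫_ℂ else 0 :=
  inner_wordVec_of_star_apply (ht.star_apply_of_apply_eq_self hx) w

lemma IsCuntzFamily.inner_wordVec_self (ht : IsCuntzFamily t) (hfix : t k Ω = Ω)
    (hΩ : ‖Ω‖ = 1) {w : List (Fin N)} (hw : w.getLast? ≠ some k) :
    ⟪Ω, wordVec t Ω w⟫_ℂ = if w = [] then 1 else 0 := by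
  rw [ht.inner_wordVec_of_apply_eq_self hfix, inner_self_eq_norm_sq_to_K, hΩ]
  by_cases h : ∀ i ∈ w, i = k
  · simp [eq_nil_of_forall_mem_eq hw h]
  · rw [if_neg h, if_neg]
    rintro rfl
    simp at h

lemma IsCuntzFamily.inner_wordVec_wordVec (ht : IsCuntzFamily t) (hfix : t k Ω = Ω)
    (hΩ : ‖Ω‖ = 1) {w v : List (Fin N)} (hw : w.getLast? ≠ some k)
    (hv : v.getLast? ≠ some k) :
    ⟪wordVec t Ω w, wordVec t Ω v⟫_ℂ = if w = v then 1 else 0 := by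
  induction w generalizing v with
  | nil => simp [ht.inner_wordVec_self hfix hΩ hv, eq_comm]
  | cons i w ih =>
    cases v with
    | nil =>
      rw [← inner_conj_symm, wordVec_nil, ht.inner_wordVec_self hfix hΩ hw]
      simp
    | cons j v =>
      rw [wordVec_cons, wordVec_cons, ← ContinuousLinearMap.adjoint_inner_right,
        ← ContinuousLinearMap.star_eq_adjoint, ht.star_apply_apply]
      by_cases hij : i = j
      · simp [hij, ih (getLast?_ne_of_cons hw) (getLast?_ne_of_cons hv)]
      · simp [hij]

lemma IsCuntzFamily.orthonormal_wordVec (ht : IsCuntzFamily t) (hfix : t k Ω = Ω)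
    (hΩ : ‖Ω‖ = 1) : Orthonormal ℂ fun w : ReducedWord k => wordVec t Ω w.1 := by
  rw [orthonormal_iff_ite]
  intro w v
  simp [ht.inner_wordVec_wordVec hfix hΩ w.2 v.2, Subtype.ext_iff]

lemma IsCuntzFamily.dense_span_wordVec (ht : IsCuntzFamily t) (hfix : t k Ω = Ω)
    (hcyc : IsCyclicVec t Ω) : Dense (Submodule.span ℂ (Set.range (wordVec t Ω)) : Set H) := by
  set K := Submodule.span ℂ (Set.range (wordVec t Ω))
  have hmem (w : List (Fin N)) : wordVec t Ω w ∈ K := Submodule.subset_span ⟨w, rfl⟩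
  have hstar (i : Fin N) (w : List (Fin N)) : star (t i) (wordVec t Ω w) ∈ K := by
    cases w with
    | nil =>
      rw [wordVec_nil, ht.star_apply_of_apply_eq_self hfix]
      split_ifs
      exacts [hmem [], K.zero_mem]
    | cons j w =>
      rw [wordVec_cons, ht.star_apply_apply]
      split_ifs
      exacts [hmem w, K.zero_mem]
  rw [Submodule.dense_iff_topologicalClosure_eq_top]
  refine hcyc _ K.isClosed_topologicalClosure (K.le_topologicalClosure (hmem [])) fun i x hx => ?_
  refine ⟨mapsTo_topologicalClosure_span (t i) ?_ hx, mapsTo_topologicalClosure_span _ ?_ hx⟩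
  · rintro _ ⟨w, rfl⟩
    exact hmem (i :: w)
  · rintro _ ⟨w, rfl⟩
    exact hstar i w

def IsCuntzFamily.wordBasis (ht : IsCuntzFamily t) (hfix : t k Ω = Ω)
    (hcyc : IsCyclicVec t Ω) (hΩ : ‖Ω‖ = 1) : HilbertBasis (ReducedWord k) ℂ H :=
  HilbertBasis.mk (ht.orthonormal_wordVec hfix hΩ) <| by
    rw [range_wordVec_reduced hfix,
      (Submodule.dense_iff_topologicalClosure_eq_top).mp (ht.dense_span_wordVec hfix hcyc)]

lemma IsCuntzFamily.coe_wordBasis (ht : IsCuntzFamily t) (hfix : t k Ω = Ω)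
    (hcyc : IsCyclicVec t Ω) (hΩ : ‖Ω‖ = 1) :
    ⇑(ht.wordBasis hfix hcyc hΩ) = fun w => wordVec t Ω w.1 :=
  HilbertBasis.coe_mk _ _

lemma IsCuntzFamily.eq_zero_of_inner_wordVec (ht : IsCuntzFamily t) (hfix : t k Ω = Ω)
    (hcyc : IsCyclicVec t Ω) {x : H} (hx : ∀ w, ⟪x, wordVec t Ω w⟫_ℂ = 0) : x = 0 := by
  have hle : Submodule.span ℂ (Set.range (wordVec t Ω)) ≤ LinearMap.ker (innerₛₗ ℂ x) :=
    Submodule.span_le.mpr <| by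
      rintro _ ⟨w, rfl⟩
      exact hx w
  exact (ht.dense_span_wordVec hfix hcyc).eq_zero_of_inner_left ℂ fun v hv => hle hv

lemma IsCuntzFamily.eq_inner_smul_of_apply_eq_self (ht : IsCuntzFamily t) (hfix : t k Ω = Ω)
    (hcyc : IsCyclicVec t Ω) (hΩ : ‖Ω‖ = 1) {x : H} (hx : t k x = x) :
    x = ⟪Ω, x⟫_ℂ • Ω := by
  rw [← sub_eq_zero]
  refine ht.eq_zero_of_inner_wordVec hfix hcyc fun w => ?_
  rw [inner_sub_left, inner_smul_left, ht.inner_wordVec_of_apply_eq_self hx,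
    ht.inner_wordVec_of_apply_eq_self hfix, inner_conj_symm, inner_self_eq_norm_sq_to_K, hΩ]
  split_ifs <;> simp

lemma IsCuntzFamily.eq_zero_of_apply_eq_self (ht : IsCuntzFamily t) (hfix : t k Ω = Ω)
    (hcyc : IsCyclicVec t Ω) {j : Fin N} (hjk : j ≠ k) {x : H} (hx : t j x = x) : x = 0 := by
  have hxΩ : ⟪x, Ω⟫_ℂ = 0 := by
    rw [← hfix, ← ContinuousLinearMap.adjoint_inner_left, ← ContinuousLinearMap.star_eq_adjoint,
      ht.star_apply_of_apply_eq_self hx, if_neg hjk.symm, inner_zero_left]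
  refine ht.eq_zero_of_inner_wordVec hfix hcyc fun w => ?_
  rw [ht.inner_wordVec_of_apply_eq_self hx, hxΩ, ite_self]

end Words

theorem IsCuntzFamily.exists_intertwiner_of_apply_eq_self
    {H H' : Type*} [NormedAddCommGroup H] [InnerProductSpace ℂ H] [CompleteSpace H]
    [NormedAddCommGroup H'] [InnerProductSpace ℂ H'] [CompleteSpace H']
    {N : ℕ} {t : Fin N → H →L[ℂ] H} {t' : Fin N → H' →L[ℂ] H'} {Ω : H} {Ω' : H'} {k : Fin N}
    (ht : IsCuntzFamily t) (ht' : IsCuntzFamily t') (hfix : t k Ω = Ω) (hfix' : t' k Ω' = Ω')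
    (hcyc : IsCyclicVec t Ω) (hcyc' : IsCyclicVec t' Ω') (hΩ : ‖Ω‖ = 1) (hΩ' : ‖Ω'‖ = 1) :
    ∃ U : H ≃ₗᵢ[ℂ] H', ∀ i x, U (t i x) = t' i (U x) := by
  classical
  let b := ht.wordBasis hfix hcyc hΩ
  let b' := ht'.wordBasis hfix' hcyc' hΩ'
  let U := b.repr.trans b'.repr.symm
  have hU (w : List (Fin N)) : U (wordVec t Ω w) = wordVec t' Ω' w := by
    let r : ReducedWord k := ⟨reduceWord k w, getLast?_reduceWord_ne k w⟩
    have hb : b r = wordVec t Ω r.1 := congrFun (ht.coe_wordBasis hfix hcyc hΩ) r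
    have hb' : b' r = wordVec t' Ω' r.1 := congrFun (ht'.coe_wordBasis hfix' hcyc' hΩ') r
    rw [← wordVec_reduceWord hfix, ← wordVec_reduceWord hfix', ← hb, ← hb',
      LinearIsometryEquiv.trans_apply, b.repr_self, b'.repr_symm_single]
  refine ⟨U, fun i x => ?_⟩
  have hcomm : (U.toContinuousLinearEquiv : H →L[ℂ] H').comp (t i) =
      (t' i).comp (U.toContinuousLinearEquiv : H →L[ℂ] H') := by
    refine ContinuousLinearMap.ext_on (ht.dense_span_wordVec hfix hcyc) ?_
    rintro _ ⟨w, rfl⟩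
    change U (t i (wordVec t Ω w)) = t' i (U (wordVec t Ω w))
    rw [← wordVec_cons, hU, hU, wordVec_cons]
  exact congr($hcomm x)

lemma IsCyclicVec.eq_smul_one_of_commute
    {H : Type*} [NormedAddCommGroup H] [InnerProductSpace ℂ H] [CompleteSpace H]
    {N : ℕ} {s : Fin N → H →L[ℂ] H} {Ω : H} (hcyc : IsCyclicVec s Ω) {T : H →L[ℂ] H}
    (hT : ∀ i, T * s i = s i * T ∧ T * star (s i) = star (s i) * T) {c : ℂ}
    (hc : T Ω = c • Ω) : T = c • 1 := by
  have hker : (T - c • 1 : H →L[ℂ] H).ker = ⊤ := by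
    refine hcyc _ (ContinuousLinearMap.isClosed_ker _) (by simp [hc]) fun i x hx => ?_
    simp only [LinearMap.mem_ker, ContinuousLinearMap.coe_coe, sub_apply, smul_apply,
      one_apply_eq_self, sub_eq_zero] at hx ⊢
    have h1 : T (s i x) = s i (T x) := congr($((hT i).1) x)
    have h2 : T (star (s i) x) = star (s i) (T x) := congr($((hT i).2) x)
    exact ⟨by rw [h1, hx, map_smul], by rw [h2, hx, map_smul]⟩
  ext x
  have hx : x ∈ (T - c • 1 : H →L[ℂ] H).ker := hker ▸ Submodule.mem_top
  simpa [sub_eq_zero] using hx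

section Hadamard

variable {H : Type*} [NormedAddCommGroup H] [InnerProductSpace ℂ H]

def hadamard : Matrix (Fin 2) (Fin 2) ℂ := (√2 : ℂ)⁻¹ • !![1, 1; 1, -1]

lemma Complex.ofReal_sqrt_two_ne_zero : (√2 : ℂ) ≠ 0 := by
  exact_mod_cast (Real.sqrt_pos.mpr zero_lt_two).ne'

lemma hadamard_mem_unitaryGroup : hadamard ∈ Matrix.unitaryGroup (Fin 2) ℂ := by
  have h : (√2 : ℂ)⁻¹ * (√2 : ℂ)⁻¹ = 2⁻¹ := by
    rw [← mul_inv, ← Complex.ofReal_mul, Real.mul_self_sqrt zero_le_two]; norm_num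
  rw [Matrix.mem_unitaryGroup_iff]
  ext i j
  fin_cases i <;> fin_cases j <;>
    simp [hadamard, Matrix.mul_apply, Fin.sum_univ_two, Matrix.star_apply, h] <;> norm_num

lemma mixFamily_hadamard_zero_apply_eq_self {s : Fin 2 → H →L[ℂ] H} {x : H}
    (h : (s 0 + s 1) x = (√2 : ℂ) • x) : mixFamily hadamard s 0 x = x := by
  have h0 : mixFamily hadamard s 0 = (√2 : ℂ)⁻¹ • (s 0 + s 1) := by
    simp [mixFamily, hadamard, Fin.sum_univ_two, smul_add]
  rw [h0, smul_apply, h, smul_smul, inv_mul_cancel₀ Complex.ofReal_sqrt_two_ne_zero, one_smul]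

lemma mixFamily_hadamard_one_apply_eq_self {s : Fin 2 → H →L[ℂ] H} {x : H}
    (h : (s 0 - s 1) x = (√2 : ℂ) • x) : mixFamily hadamard s 1 x = x := by
  have h1 : mixFamily hadamard s 1 = (√2 : ℂ)⁻¹ • (s 0 - s 1) := by
    simp [mixFamily, hadamard, Fin.sum_univ_two, sub_eq_add_neg]
  rw [h1, smul_apply, h, smul_smul, inv_mul_cancel₀ Complex.ofReal_sqrt_two_ne_zero, one_smul]

end Hadamard

theorem GP_plus_minus_classification
    {H H' : Type*} [NormedAddCommGroup H] [InnerProductSpace ℂ H] [CompleteSpace H]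
    [NormedAddCommGroup H'] [InnerProductSpace ℂ H'] [CompleteSpace H']
    (s : Fin 2 → H →L[ℂ] H) (s' : Fin 2 → H' →L[ℂ] H')
    (hs : IsCuntzFamily s) (hs' : IsCuntzFamily s')
    (Ω : H) (Ω' : H') (hΩ : ‖Ω‖ = 1) (hΩ' : ‖Ω'‖ = 1)
    (hcyc : IsCyclicVec s Ω) (hcyc' : IsCyclicVec s' Ω') :
    -- (1) irreducibility of GP(+)
    ((s 0 + s 1) Ω = (Real.sqrt 2 : ℂ) • Ω →
      ∀ T : H →L[ℂ] H, (∀ i, T * s i = s i * T ∧ T * star (s i) = star (s i) * T) →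
        ∃ c : ℂ, T = c • (1 : H →L[ℂ] H))
    -- (2) uniqueness of GP(+)
    ∧ ((s 0 + s 1) Ω = (Real.sqrt 2 : ℂ) • Ω → (s' 0 + s' 1) Ω' = (Real.sqrt 2 : ℂ) • Ω' →
        ∃ U : H ≃ₗᵢ[ℂ] H', ∀ i, ∀ x : H, U (s i x) = s' i (U x))
    -- (2') uniqueness of GP(−)
    ∧ ((s 0 - s 1) Ω = (Real.sqrt 2 : ℂ) • Ω → (s' 0 - s' 1) Ω' = (Real.sqrt 2 : ℂ) • Ω' →
        ∃ U : H ≃ₗᵢ[ℂ] H', ∀ i, ∀ x : H, U (s i x) = s' i (U x))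
    -- (3) GP(+) and GP(−) are inequivalent
    ∧ ((s 0 + s 1) Ω = (Real.sqrt 2 : ℂ) • Ω → (s' 0 - s' 1) Ω' = (Real.sqrt 2 : ℂ) • Ω' →
        ¬ ∃ U : H ≃ₗᵢ[ℂ] H', ∀ i, ∀ x : H, U (s i x) = s' i (U x)) := by
  have ht := isCuntzFamily_mixFamily hs hadamard_mem_unitaryGroup
  have ht' := isCuntzFamily_mixFamily hs' hadamard_mem_unitaryGroup
  have htc := isCyclicVec_mixFamily hcyc hadamard_mem_unitaryGroup
  have htc' := isCyclicVec_mixFamily hcyc' hadamard_mem_unitaryGroup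
  refine ⟨fun hplus T hT => ?_, fun hplus hplus' => ?_, fun hminus hminus' => ?_,
    fun hplus hminus' ⟨U, hU⟩ => ?_⟩
  · have hfix := mixFamily_hadamard_zero_apply_eq_self hplus
    have hTΩ : mixFamily hadamard s 0 (T Ω) = T Ω := by
      rw [← map_mixFamily_apply T fun i x => congr($((hT i).1) x), hfix]
    exact ⟨_, hcyc.eq_smul_one_of_commute hT (ht.eq_inner_smul_of_apply_eq_self hfix htc hΩ hTΩ)⟩
  · obtain ⟨U, hU⟩ := ht.exists_intertwiner_of_apply_eq_self ht'
      (mixFamily_hadamard_zero_apply_eq_self hplus)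
      (mixFamily_hadamard_zero_apply_eq_self hplus') htc htc' hΩ hΩ'
    exact ⟨U, intertwines_of_mixFamily hadamard_mem_unitaryGroup U hU⟩
  · obtain ⟨U, hU⟩ := ht.exists_intertwiner_of_apply_eq_self ht'
      (mixFamily_hadamard_one_apply_eq_self hminus)
      (mixFamily_hadamard_one_apply_eq_self hminus') htc htc' hΩ hΩ'
    exact ⟨U, intertwines_of_mixFamily hadamard_mem_unitaryGroup U hU⟩
  · have hUΩ : mixFamily hadamard s' 0 (U Ω) = U Ω := by
      rw [← map_mixFamily_apply U hU, mixFamily_hadamard_zero_apply_eq_self hplus]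
    have hUΩ_eq_zero := ht'.eq_zero_of_apply_eq_self
      (mixFamily_hadamard_one_apply_eq_self hminus') htc' zero_ne_one hUΩ
    rw [← U.norm_map, hUΩ_eq_zero, norm_zero] at hΩ
    exact zero_ne_one hΩ
end
end

section
/- Let (s_1, s_2) be a Cuntz family of order 2 on a complex Hilbert space H, let (a_n)_{n≥1} be the associated recursive fermion system, let t_1 := s_2 s_2 s_1^* + s_1 s_1 s_2^* and t_2 := s_2 s_1 s_1^* + s_1 s_2 s_2^* (the images of the generators under the permutative endomorphism ψ_{(142)}, so that (t_1, t_2) is again a Cuntz family), and let (a'_n)_{n≥1} be the recursive fermion system built from (t_1, t_2) (i.e. a'_n = ψ_{(142)}(a_n)). Then for every n ≥ 1: a'_{2n−1} = (−1)^{n−1}(a_1 a_1^* a_{2n} − a_1^* a_1 a_{2n}^*) and a'_{2n} = (−1)^{n−1}(a_1 a_1^* a_{2n+1}^* + a_1^* a_1 a_{2n+1}). -/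
noncomputable section

section Key

variable {R : Type*} [Ring R] [StarRing R]

lemma psi142_keyB (a b w z y u v : R) (h00 : star a * a = 1) (h11 : star b * b = 1)
    (h01 : star a * b = 0) (h10 : star b * a = 0)
    (hu : u = b*b*star a + a*a*star b) (hv : v = b*a*star a + a*b*star b)
    (hz : z = a*w*star a - b*w*star b) (hy : y = a*z*star a - b*z*star b) :
    u * (a*star a*z - b*star b*star z) * star u - v * (a*star a*z - b*star b*star z) * star v
      = a*star a * star y + b*star b * y := by
  subst hu hv hz hy
  have l1 : ∀ x : R, star a * (a * x) = x := fun x => by rw [← mul_assoc, h00, one_mul]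
  have l2 : ∀ x : R, star b * (b * x) = x := fun x => by rw [← mul_assoc, h11, one_mul]
  have l3 : ∀ x : R, star a * (b * x) = 0 := fun x => by rw [← mul_assoc, h01, zero_mul]
  have l4 : ∀ x : R, star b * (a * x) = 0 := fun x => by rw [← mul_assoc, h10, zero_mul]
  simp only [star_add, star_mul, star_star, star_sub]
  simp only [mul_add, add_mul, mul_sub, sub_mul, mul_assoc, l1, l2, l3, l4,
    h00, h11, h01, h10, mul_zero, zero_mul, mul_one, one_mul, sub_zero, zero_sub,
    zero_add, add_zero, neg_neg, neg_mul, mul_neg]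
  abel

lemma psi142_keyA (a b w z y u v : R) (h00 : star a * a = 1) (h11 : star b * b = 1)
    (h01 : star a * b = 0) (h10 : star b * a = 0)
    (hu : u = b*b*star a + a*a*star b) (hv : v = b*a*star a + a*b*star b)
    (hz : z = a*w*star a - b*w*star b) (hy : y = a*z*star a - b*z*star b) :
    u * (a*star a*star z + b*star b*z) * star u - v * (a*star a*star z + b*star b*z) * star v
      = -(a*star a * y - b*star b * star y) := by
  subst hu hv hz hy
  have l1 : ∀ x : R, star a * (a * x) = x := fun x => by rw [← mul_assoc, h00, one_mul]
  have l2 : ∀ x : R, star b * (b * x) = x := fun x => by rw [← mul_assoc, h11, one_mul]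
  have l3 : ∀ x : R, star a * (b * x) = 0 := fun x => by rw [← mul_assoc, h01, zero_mul]
  have l4 : ∀ x : R, star b * (a * x) = 0 := fun x => by rw [← mul_assoc, h10, zero_mul]
  simp only [star_add, star_mul, star_star, star_sub]
  simp only [mul_add, add_mul, mul_sub, sub_mul, mul_assoc, l1, l2, l3, l4,
    h00, h11, h01, h10, mul_zero, zero_mul, mul_one, one_mul, sub_zero, zero_sub,
    zero_add, add_zero, neg_neg, neg_mul, mul_neg, neg_sub, neg_add]
  abel

lemma psi142_base (a b z u v : R) (h00 : star a * a = 1) (h11 : star b * b = 1)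
    (h01 : star a * b = 0) (h10 : star b * a = 0)
    (hu : u = b*b*star a + a*a*star b) (hv : v = b*a*star a + a*b*star b)
    (hz : z = a*(a*star b)*star a - b*(a*star b)*star b) :
    u * star v = a*star a * z - b*star b * star z := by
  subst hu hv hz
  have l1 : ∀ x : R, star a * (a * x) = x := fun x => by rw [← mul_assoc, h00, one_mul]
  have l2 : ∀ x : R, star b * (b * x) = x := fun x => by rw [← mul_assoc, h11, one_mul]
  have l3 : ∀ x : R, star a * (b * x) = 0 := fun x => by rw [← mul_assoc, h01, zero_mul]
  have l4 : ∀ x : R, star b * (a * x) = 0 := fun x => by rw [← mul_assoc, h10, zero_mul]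
  simp only [star_add, star_mul, star_star, star_sub]
  simp only [mul_add, add_mul, mul_sub, sub_mul, mul_assoc, l1, l2, l3, l4,
    h00, h11, h01, h10, mul_zero, zero_mul, mul_one, one_mul, sub_zero, zero_sub,
    zero_add, add_zero, neg_neg, neg_mul, mul_neg]
  abel

end Key

theorem psi142_on_fermions
    {H : Type*} [NormedAddCommGroup H] [InnerProductSpace ℂ H] [CompleteSpace H]
    (s : Fin 2 → H →L[ℂ] H) (hs : IsCuntzFamily s)
    (t : Fin 2 → H →L[ℂ] H)
    (ht0 : t 0 = s 1 * s 1 * star (s 0) + s 0 * s 0 * star (s 1))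
    (ht1 : t 1 = s 1 * s 0 * star (s 0) + s 0 * s 1 * star (s 1)) :
    ∀ n : ℕ, 1 ≤ n →
      rfs t (2 * n - 1)
        = ((-1 : ℂ) ^ (n - 1)) •
            (rfs s 1 * star (rfs s 1) * rfs s (2 * n)
              - star (rfs s 1) * rfs s 1 * star (rfs s (2 * n)))
      ∧ rfs t (2 * n)
        = ((-1 : ℂ) ^ (n - 1)) •
            (rfs s 1 * star (rfs s 1) * star (rfs s (2 * n + 1))
              + star (rfs s 1) * rfs s 1 * rfs s (2 * n + 1)) := by
  have h00 : star (s 0) * s 0 = 1 := by simpa using hs.1 0 0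
  have h11 : star (s 1) * s 1 = 1 := by simpa using hs.1 1 1
  have h01 : star (s 0) * s 1 = 0 := by simpa using hs.1 0 1
  have h10 : star (s 1) * s 0 = 0 := by simpa using hs.1 1 0
  have l1 : ∀ x : H →L[ℂ] H, star (s 0) * (s 0 * x) = x := fun x => by
    rw [← mul_assoc, h00, one_mul]
  have l2 : ∀ x : H →L[ℂ] H, star (s 1) * (s 1 * x) = x := fun x => by
    rw [← mul_assoc, h11, one_mul]
  have he : rfs s 1 * star (rfs s 1) = s 0 * star (s 0) := by
    show (s 0 * star (s 1)) * star (s 0 * star (s 1)) = _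
    rw [star_mul, star_star]
    rw [mul_assoc, l2]
  have hf : star (rfs s 1) * rfs s 1 = s 1 * star (s 1) := by
    show star (s 0 * star (s 1)) * (s 0 * star (s 1)) = _
    rw [star_mul, star_star]
    rw [mul_assoc, l1]
  have hz : ∀ (c : ℂ) (x : H →L[ℂ] H),
      t 0 * (c • x) * star (t 0) - t 1 * (c • x) * star (t 1)
        = c • (t 0 * x * star (t 0) - t 1 * x * star (t 1)) := by
    intro c x
    rw [mul_smul_comm, smul_mul_assoc, mul_smul_comm, smul_mul_assoc, smul_sub]
  -- main induction
  have main : ∀ m : ℕ,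
      rfsAux t (2*m) = ((-1 : ℂ) ^ m) •
        (s 0 * star (s 0) * rfsAux s (2*m+1) - s 1 * star (s 1) * star (rfsAux s (2*m+1)))
      ∧ rfsAux t (2*m+1) = ((-1 : ℂ) ^ m) •
        (s 0 * star (s 0) * star (rfsAux s (2*m+2)) + s 1 * star (s 1) * rfsAux s (2*m+2)) := by
    intro m
    induction m with
    | zero =>
      constructor
      · show t 0 * star (t 1) = _
        rw [pow_zero, one_smul]
        exact psi142_base (s 0) (s 1) _ _ _ h00 h11 h01 h10 ht0 ht1 rfl
      · show t 0 * rfsAux t 0 * star (t 0) - t 1 * rfsAux t 0 * star (t 1) = _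
        have hP : rfsAux t 0 = ((-1 : ℂ) ^ 0) •
            (s 0 * star (s 0) * rfsAux s 1 - s 1 * star (s 1) * star (rfsAux s 1)) := by
          rw [pow_zero, one_smul]
          exact psi142_base (s 0) (s 1) _ _ _ h00 h11 h01 h10 ht0 ht1 rfl
        rw [hP, hz]
        rw [psi142_keyB (s 0) (s 1) (rfsAux s 0) (rfsAux s 1) (rfsAux s 2) _ _
          h00 h11 h01 h10 ht0 ht1 rfl rfl]
    | succ m ih =>
      have hP : rfsAux t (2*m+2) = ((-1 : ℂ) ^ (m+1)) •
          (s 0 * star (s 0) * rfsAux s (2*m+3)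
            - s 1 * star (s 1) * star (rfsAux s (2*m+3))) := by
        show t 0 * rfsAux t (2*m+1) * star (t 0) - t 1 * rfsAux t (2*m+1) * star (t 1) = _
        rw [ih.2, hz]
        rw [psi142_keyA (s 0) (s 1) (rfsAux s (2*m+1)) (rfsAux s (2*m+2)) (rfsAux s (2*m+3)) _ _
          h00 h11 h01 h10 ht0 ht1 rfl rfl]
        rw [smul_neg, pow_succ, mul_smul, neg_one_smul, smul_neg]
      have hQ : rfsAux t (2*m+3) = ((-1 : ℂ) ^ (m+1)) •
          (s 0 * star (s 0) * star (rfsAux s (2*m+4))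
            + s 1 * star (s 1) * rfsAux s (2*m+4)) := by
        show t 0 * rfsAux t (2*m+2) * star (t 0) - t 1 * rfsAux t (2*m+2) * star (t 1) = _
        rw [hP, hz]
        rw [psi142_keyB (s 0) (s 1) (rfsAux s (2*m+2)) (rfsAux s (2*m+3)) (rfsAux s (2*m+4)) _ _
          h00 h11 h01 h10 ht0 ht1 rfl rfl]
      have e1 : 2*(m+1) = 2*m+2 := by ring
      have e2 : 2*(m+1)+1 = 2*m+3 := by ring
      have e3 : 2*(m+1)+2 = 2*m+4 := by ring
      rw [e3, e2, e1]
      exact ⟨hP, hQ⟩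
  intro n hn
  obtain ⟨m, rfl⟩ : ∃ m, n = m + 1 := ⟨n - 1, by omega⟩
  have i1 : 2*(m+1) - 1 - 1 = 2*m := by omega
  have i2 : 2*(m+1) - 1 = 2*m+1 := by omega
  have i3 : 2*(m+1) + 1 - 1 = 2*m+2 := by omega
  have i4 : m + 1 - 1 = m := by omega
  constructor
  · show rfsAux t (2*(m+1) - 1 - 1) = _
    rw [i1, i4, he, hf]
    show _ = _ • (_ * rfsAux s (2*(m+1) - 1) - _ * star (rfsAux s (2*(m+1) - 1)))
    rw [i2]
    exact (main m).1
  · show rfsAux t (2*(m+1) - 1) = _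
    rw [i2, i4, he, hf]
    show _ = _ • (_ * star (rfsAux s (2*(m+1) + 1 - 1)) + _ * rfsAux s (2*(m+1) + 1 - 1))
    rw [i3]
    exact (main m).2
end
end

section
/- Let (a_n)_{n≥1} be a sequence in a unital complex *-algebra satisfying the canonical anticommutation relations, and define for n ≥ 1: c_n := (−1)^{n−1}(a_1 a_1^* a_{2n+1}^* + a_1^* a_1 a_{2n+1}) and d_n := (−1)^{n−1}(a_1 a_1^* a_{2n} − a_1^* a_1 a_{2n}^*). Then the family {c_n, d_n : n ≥ 1} again satisfies the canonical anticommutation relations: for all n, m ≥ 1, c_n c_m + c_m c_n = 0, d_n d_m + d_m d_n = 0, c_n d_m + d_m c_n = 0, c_n d_m^* + d_m^* c_n = 0, c_n c_m^* + c_m^* c_n = δ_{nm}·1, and d_n d_m^* + d_m^* d_n = δ_{nm}·1. -/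
noncomputable section

/-- The canonical anticommutation relations for a sequence `a_1, a_2, …`
(indexed by `n ≥ 1`). -/
def SatisfiesCAR {A : Type*} [Ring A] [StarRing A] (a : ℕ → A) : Prop :=
  ∀ n m : ℕ, 1 ≤ n → 1 ≤ m →
    (a n * star (a m) + star (a m) * a n = if n = m then (1 : A) else 0) ∧
    a n * a m + a m * a n = 0

/-- The mixed fermion `c_n = b_{n-1/2} = (-1)^{n-1}(a_1 a_1^* a_{2n+1}^* + a_1^* a_1 a_{2n+1})`. -/
def mixedC {A : Type*} [Ring A] [StarRing A] (a : ℕ → A) (n : ℕ) : A :=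
  (-1 : A) ^ (n - 1) *
    (a 1 * star (a 1) * star (a (2 * n + 1)) + star (a 1) * a 1 * a (2 * n + 1))

/-- The mixed fermion `d_n = b_{-(n-1/2)} = (-1)^{n-1}(a_1 a_1^* a_{2n} - a_1^* a_1 a_{2n}^*)`. -/
def mixedD {A : Type*} [Ring A] [StarRing A] (a : ℕ → A) (n : ℕ) : A :=
  (-1 : A) ^ (n - 1) *
    (a 1 * star (a 1) * a (2 * n) - star (a 1) * a 1 * star (a (2 * n)))

section AuxCAR

variable {A : Type*} [Ring A]

lemma negswap_mul_comm' {u v p : A} (h1 : p*u = -(u*p)) (h2 : p*v = -(v*p)) :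
    p*(u*v) = (u*v)*p := by
  rw [← mul_assoc, h1, neg_mul, mul_assoc, h2, mul_neg, neg_neg, ← mul_assoc]

lemma mixmul' {e f p q r s : A} (he : e*e = e) (hf : f*f = f)
    (hef : e*f = 0) (hfe : f*e = 0)
    (hpe : p*e = e*p) (hpf : p*f = f*p) (hqe : q*e = e*q) (hqf : q*f = f*q) :
    (e*p + f*q) * (e*r + f*s) = e*(p*r) + f*(q*s) := by
  have h1 : e*p*(e*r) = e*(p*r) := by
    rw [mul_assoc e p, ← mul_assoc p e, hpe, ← mul_assoc, ← mul_assoc, he, mul_assoc]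
  have h2 : e*p*(f*s) = 0 := by
    rw [mul_assoc e p, ← mul_assoc p f, hpf, ← mul_assoc, ← mul_assoc, hef, zero_mul, zero_mul]
  have h3 : f*q*(e*r) = 0 := by
    rw [mul_assoc f q, ← mul_assoc q e, hqe, ← mul_assoc, ← mul_assoc, hfe, zero_mul, zero_mul]
  have h4 : f*q*(f*s) = f*(q*s) := by
    rw [mul_assoc f q, ← mul_assoc q f, hqf, ← mul_assoc, ← mul_assoc, hf, mul_assoc]
  rw [add_mul, mul_add, mul_add, h1, h2, h3, h4, add_zero, zero_add]

lemma central_anticomm' {s t X Y : A} (hs : ∀ u : A, s*u = u*s) (ht : ∀ u : A, t*u = u*t) :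
    (s*X)*(t*Y) + (t*Y)*(s*X) = (s*t)*(X*Y + Y*X) := by
  have h1 : (s*X)*(t*Y) = (s*t)*(X*Y) := by
    rw [mul_assoc s X, ← mul_assoc X t, ← ht X, mul_assoc t X, ← mul_assoc s t]
  have h2 : (t*Y)*(s*X) = (s*t)*(Y*X) := by
    rw [mul_assoc t Y, ← mul_assoc Y s, ← hs Y, mul_assoc s Y, ← mul_assoc, ← hs t]
  rw [h1, h2, ← mul_add]

lemma key' {e f : A} (he : e*e = e) (hf : f*f = f)
    (hef : e*f = 0) (hfe : f*e = 0) {p q r s : A}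
    (hpe : p*e = e*p) (hpf : p*f = f*p) (hqe : q*e = e*q) (hqf : q*f = f*q)
    (hre : r*e = e*r) (hrf : r*f = f*r) (hse : s*e = e*s) (hsf : s*f = f*s)
    (n m : ℕ) :
    ((-1:A)^n * (e*p + f*q)) * ((-1:A)^m * (e*r + f*s))
      + ((-1:A)^m * (e*r + f*s)) * ((-1:A)^n * (e*p + f*q))
    = (-1:A)^(n+m) * (e*(p*r + r*p) + f*(q*s + s*q)) := by
  have hcen : ∀ (k : ℕ) (u : A), (-1:A)^k * u = u * (-1:A)^k :=
    fun k u => ((Commute.neg_one_left u).pow_left k).eq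
  rw [central_anticomm' (hcen n) (hcen m), ← pow_add,
      mixmul' he hf hef hfe hpe hpf hqe hqf,
      mixmul' he hf hef hfe hre hrf hse hsf]
  congr 1
  rw [mul_add e, mul_add f]
  abel

end AuxCAR

theorem mixed_fermions_satisfy_CAR
    {A : Type*} [Ring A] [Algebra ℂ A] [StarRing A]
    (a : ℕ → A) (ha : SatisfiesCAR a) :
    ∀ n m : ℕ, 1 ≤ n → 1 ≤ m →
      mixedC a n * mixedC a m + mixedC a m * mixedC a n = 0
      ∧ mixedD a n * mixedD a m + mixedD a m * mixedD a n = 0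
      ∧ mixedC a n * mixedD a m + mixedD a m * mixedC a n = 0
      ∧ mixedC a n * star (mixedD a m) + star (mixedD a m) * mixedC a n = 0
      ∧ mixedC a n * star (mixedC a m) + star (mixedC a m) * mixedC a n
          = (if n = m then (1 : A) else 0)
      ∧ mixedD a n * star (mixedD a m) + star (mixedD a m) * mixedD a n
          = (if n = m then (1 : A) else 0) := by
  intro n m hn hm
  set E : A := a 1 * star (a 1) with hEdef
  set F : A := star (a 1) * a 1 with hFdef
  have hcen : ∀ (j : ℕ) (u : A), (-1:A)^j * u = u * (-1:A)^j :=
    fun j u => ((Commute.neg_one_left u).pow_left j).eq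
  have hsq : ∀ k, 1 ≤ k → a k * a k = 0 := by
    intro k hk
    have h := (ha k k hk hk).2
    have h2 : (2:ℂ) • (a k * a k) = 0 := by rw [two_smul]; exact h
    have h3 := congrArg (fun y : A => (2⁻¹:ℂ) • y) h2
    simpa [smul_smul] using h3
  have hssq : star (a 1) * star (a 1) = 0 := by
    have := congrArg star (hsq 1 le_rfl)
    simpa [star_mul] using this
  have hEF : E * F = 0 := by
    rw [hEdef, hFdef, mul_assoc, ← mul_assoc (star (a 1)), hssq, zero_mul, mul_zero]
  have hFE : F * E = 0 := by
    rw [hFdef, hEdef, mul_assoc, ← mul_assoc (a 1), hsq 1 le_rfl, zero_mul, mul_zero]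
  have hsum : E + F = 1 := by
    have h := (ha 1 1 le_rfl le_rfl).1
    rw [if_pos rfl] at h
    rw [hEdef, hFdef]; exact h
  have hE : E * E = E := by
    have h : E * (E + F) = E * 1 := by rw [hsum]
    rw [mul_add, hEF, add_zero, mul_one] at h; exact h
  have hF : F * F = F := by
    have h : F * (E + F) = F * 1 := by rw [hsum]
    rw [mul_add, hFE, zero_add, mul_one] at h; exact h
  have hanti : ∀ k, 2 ≤ k →
      (a k * E = E * a k ∧ a k * F = F * a k ∧
       star (a k) * E = E * star (a k) ∧ star (a k) * F = F * star (a k)) := by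
    intro k hk
    have hk1 : 1 ≤ k := by omega
    have hkne : k ≠ 1 := by omega
    have hne1 : (1:ℕ) ≠ k := by omega
    have h1 : a k * a 1 = -(a 1 * a k) :=
      eq_neg_of_add_eq_zero_left (ha k 1 hk1 le_rfl).2
    have h2 : a k * star (a 1) = -(star (a 1) * a k) := by
      have h := (ha k 1 hk1 le_rfl).1
      rw [if_neg hkne] at h
      exact eq_neg_of_add_eq_zero_left h
    have h3 : star (a k) * star (a 1) = -(star (a 1) * star (a k)) := by
      have h := congrArg star (ha 1 k le_rfl hk1).2
      simp only [star_add, star_mul, star_zero] at h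
      exact eq_neg_of_add_eq_zero_left h
    have h4 : star (a k) * a 1 = -(a 1 * star (a k)) := by
      have h := (ha 1 k le_rfl hk1).1
      rw [if_neg hne1] at h
      exact eq_neg_of_add_eq_zero_right h
    rw [hEdef, hFdef]
    exact ⟨negswap_mul_comm' h1 h2, negswap_mul_comm' h2 h1,
           negswap_mul_comm' h4 h3, negswap_mul_comm' h3 h4⟩
  have negc : ∀ {u v : A}, u * v = v * u → (-u) * v = v * (-u) := by
    intro u v h; rw [neg_mul, h, mul_neg]
  have hacs : ∀ j k, 1 ≤ j → 1 ≤ k →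
      star (a j) * star (a k) + star (a k) * star (a j) = 0 := by
    intro j k hj hk
    have h := congrArg star (ha k j hk hj).2
    simpa [star_mul] using h
  obtain ⟨hxE, hxF, hxsE, hxsF⟩ := hanti (2*n+1) (by omega)
  obtain ⟨hyE, hyF, hysE, hysF⟩ := hanti (2*m+1) (by omega)
  obtain ⟨hzE, hzF, hzsE, hzsF⟩ := hanti (2*n) (by omega)
  obtain ⟨hwE, hwF, hwsE, hwsF⟩ := hanti (2*m) (by omega)
  have repC : ∀ k : ℕ, mixedC a k = (-1:A)^(k-1) * (E * star (a (2*k+1)) + F * a (2*k+1)) := by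
    intro k; unfold mixedC; rw [hEdef, hFdef]
  have repD : ∀ k : ℕ, mixedD a k
      = (-1:A)^(k-1) * (E * a (2*k) + F * (-(star (a (2*k))))) := by
    intro k; unfold mixedD; rw [hEdef, hFdef, mul_neg, ← sub_eq_add_neg]
  have repsC : star (mixedC a m)
      = (-1:A)^(m-1) * (E * a (2*m+1) + F * star (a (2*m+1))) := by
    unfold mixedC
    simp only [star_mul, star_add, star_star, star_pow, star_neg, star_one]
    rw [← hEdef, ← hFdef]
    rw [hyE, hysF, ← hcen (m-1)]
  have repsD : star (mixedD a m)
      = (-1:A)^(m-1) * (E * star (a (2*m)) + F * (-(a (2*m)))) := by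
    unfold mixedD
    simp only [star_sub, star_mul, star_add, star_star, star_pow, star_neg, star_one]
    rw [← hEdef, ← hFdef]
    rw [hwsE, hwF, ← hcen (m-1), mul_neg, ← sub_eq_add_neg]
  have hsign : ∀ k:ℕ, (-1:A)^((k-1)+(k-1)) = 1 := fun k => Even.neg_one_pow ⟨k-1, rfl⟩
  refine ⟨?_, ?_, ?_, ?_, ?_, ?_⟩
  · -- c c
    rw [repC n, repC m,
        key' hE hF hEF hFE hxsE hxsF hxE hxF hysE hysF hyE hyF]
    rw [hacs (2*n+1) (2*m+1) (by omega) (by omega),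
        (ha (2*n+1) (2*m+1) (by omega) (by omega)).2,
        mul_zero, mul_zero, add_zero, mul_zero]
  · -- d d
    rw [repD n, repD m,
        key' hE hF hEF hFE hzE hzF (negc hzsE) (negc hzsF) hwE hwF (negc hwsE) (negc hwsF)]
    rw [neg_mul_neg, neg_mul_neg,
        hacs (2*n) (2*m) (by omega) (by omega),
        (ha (2*n) (2*m) (by omega) (by omega)).2,
        mul_zero, mul_zero, add_zero, mul_zero]
  · -- c d
    rw [repC n, repD m,
        key' hE hF hEF hFE hxsE hxsF hxE hxF hwE hwF (negc hwsE) (negc hwsF)]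
    have h1 : star (a (2*n+1)) * a (2*m) + a (2*m) * star (a (2*n+1)) = 0 := by
      have h := (ha (2*m) (2*n+1) (by omega) (by omega)).1
      rw [if_neg (by omega)] at h
      rw [add_comm]; exact h
    have h2 : a (2*n+1) * (-(star (a (2*m)))) + (-(star (a (2*m)))) * a (2*n+1) = 0 := by
      have h := (ha (2*n+1) (2*m) (by omega) (by omega)).1
      rw [if_neg (by omega)] at h
      rw [mul_neg, neg_mul, ← neg_add, h, neg_zero]
    rw [h1, h2, mul_zero, mul_zero, add_zero, mul_zero]
  · -- c d*
    rw [repC n, repsD,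
        key' hE hF hEF hFE hxsE hxsF hxE hxF hwsE hwsF (negc hwE) (negc hwF)]
    have h1 := hacs (2*n+1) (2*m) (by omega) (by omega)
    have h2 : a (2*n+1) * (-(a (2*m))) + (-(a (2*m))) * a (2*n+1) = 0 := by
      rw [mul_neg, neg_mul, ← neg_add,
          (ha (2*n+1) (2*m) (by omega) (by omega)).2, neg_zero]
    rw [h1, h2, mul_zero, mul_zero, add_zero, mul_zero]
  · -- c c*
    rw [repC n, repsC,
        key' hE hF hEF hFE hxsE hxsF hxE hxF hyE hyF hysE hysF]
    have h1 : star (a (2*n+1)) * a (2*m+1) + a (2*m+1) * star (a (2*n+1))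
        = if n = m then (1:A) else 0 := by
      have h := (ha (2*m+1) (2*n+1) (by omega) (by omega)).1
      rw [add_comm] at h
      rw [h]
      by_cases hnm : n = m
      · rw [if_pos (show 2*m+1 = 2*n+1 by omega), if_pos hnm]
      · rw [if_neg (show ¬(2*m+1 = 2*n+1) by omega), if_neg hnm]
    have h2 : a (2*n+1) * star (a (2*m+1)) + star (a (2*m+1)) * a (2*n+1)
        = if n = m then (1:A) else 0 := by
      have h := (ha (2*n+1) (2*m+1) (by omega) (by omega)).1
      rw [h]
      by_cases hnm : n = m
      · rw [if_pos (show 2*n+1 = 2*m+1 by omega), if_pos hnm]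
      · rw [if_neg (show ¬(2*n+1 = 2*m+1) by omega), if_neg hnm]
    rw [h1, h2]
    by_cases hnm : n = m
    · subst hnm
      rw [if_pos rfl, mul_one, mul_one, hsum, mul_one, hsign n]
    · rw [if_neg hnm, mul_zero, mul_zero, add_zero, mul_zero]
  · -- d d*
    rw [repD n, repsD,
        key' hE hF hEF hFE hzE hzF (negc hzsE) (negc hzsF) hwsE hwsF (negc hwE) (negc hwF)]
    have h1 : a (2*n) * star (a (2*m)) + star (a (2*m)) * a (2*n)
        = if n = m then (1:A) else 0 := by
      have h := (ha (2*n) (2*m) (by omega) (by omega)).1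
      rw [h]
      by_cases hnm : n = m
      · rw [if_pos (show 2*n = 2*m by omega), if_pos hnm]
      · rw [if_neg (show ¬(2*n = 2*m) by omega), if_neg hnm]
    have h2 : (-(star (a (2*n)))) * (-(a (2*m))) + (-(a (2*m))) * (-(star (a (2*n))))
        = if n = m then (1:A) else 0 := by
      rw [neg_mul_neg, neg_mul_neg]
      have h := (ha (2*m) (2*n) (by omega) (by omega)).1
      rw [add_comm] at h
      rw [h]
      by_cases hnm : n = m
      · rw [if_pos (show 2*m = 2*n by omega), if_pos hnm]
      · rw [if_neg (show ¬(2*m = 2*n) by omega), if_neg hnm]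
    rw [h1, h2]
    by_cases hnm : n = m
    · subst hnm
      rw [if_pos rfl, mul_one, mul_one, hsum, mul_one, hsign n]
    · rw [if_neg hnm, mul_zero, mul_zero, add_zero, mul_zero]
end
end
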